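/- Let ε_1 = (1,1,1), ε_2 = (−1,1,−1), ε_3 = (1,−1,−1), ε_4 = (−1,−1,1) in {±1}³, and for i,j,k ∈ {1,2,3} define T_{ijk} : ℝ³ → ℝ by T_{ijk}(x) = Σ_{a=1}^{4} ε_a^{(i)} ε_a^{(j)} ε_a^{(k)} · (1/16) · tan( π/4 − (ε_a · x)/4 ) + (1/4)·tan(−x_i/2) if i = j = k (no tan(−x_i/2) term otherwise). Then for every x ∈ ℝ³ such that cos(π/4 − (ε_a·x)/4) ≠ 0 for a = 1,…,4 and cos(x_i/2) ≠ 0 for i = 1,2,3, one has T_{112}(x)·T_{133}(x) + T_{122}(x)·T_{233}(x) + T_{123}(x)·T_{333}(x) = T_{113}(x)·T_{123}(x) + T_{123}(x)·T_{223}(x) + T_{133}(x)·T_{233}(x). -/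

import Mathlib

/-!
The four angles `A a = π/4 - (ε_a · x)/4` pair up: `A 0 + A 3 = π/2 - x₂/2` and
`A 1 + A 2 = π/2 + x₂/2`. By the tangent addition formula, the tangents `t_a = tan (A a)` and
`v = tan (x₂/2)` therefore satisfy `v (t₀ + t₃) = 1 - t₀ t₃` and `-v (t₁ + t₂) = 1 - t₁ t₂`.
Only the combinations `t₀ ± t₁ ± t₂ ± t₃` and `v` enter the `T_{ijk}` in the equation, which
is `1/64` times the difference of these two relations.
-/

open Real

/-- The four sign vectors `ε_1, …, ε_4` appearing in the `ℤ/2 × ℤ/2`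
generating function. -/
noncomputable def eps : Fin 4 → Fin 3 → ℝ :=
  ![![1, 1, 1], ![-1, 1, -1], ![1, -1, -1], ![-1, -1, 1]]

/-- The third partial derivatives `T_{ijk} = ∂³F/∂x_i∂x_j∂x_k` of the explicit
`ℤ/2 × ℤ/2` generating function. -/
noncomputable def T (i j k : Fin 3) (x : Fin 3 → ℝ) : ℝ :=
  (∑ a : Fin 4, eps a i * eps a j * eps a k * (1/16) *
      Real.tan (Real.pi / 4 - (∑ t : Fin 3, eps a t * x t) / 4))
  + (if i = j ∧ j = k then (1/4) * Real.tan (-(x i) / 2) else 0)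

lemma tan_mul_add_tan_of_add_eq_pi_div_two_sub {α β θ : ℝ} (hα : cos α ≠ 0) (hβ : cos β ≠ 0)
    (hθ : cos θ ≠ 0) (h : α + β = π / 2 - θ) :
    tan θ * (tan α + tan β) = 1 - tan α * tan β := by
  have hsin : sin α * cos β + cos α * sin β = cos θ := by
    rw [← sin_add, h, sin_pi_div_two_sub]
  have hcos : cos α * cos β - sin α * sin β = sin θ := by
    rw [← cos_add, h, cos_pi_div_two_sub]
  simp only [tan_eq_sin_div_cos]
  field_simp
  linear_combination sin θ * hsin - cos θ * hcos

noncomputable def kleinAngle (a : Fin 4) (x : Fin 3 → ℝ) : ℝ :=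
  π / 4 - (∑ t : Fin 3, eps a t * x t) / 4

lemma T_eq_sum_tan_kleinAngle (i j k : Fin 3) (x : Fin 3 → ℝ) :
    T i j k x = (∑ a : Fin 4, eps a i * eps a j * eps a k * (1 / 16) * tan (kleinAngle a x))
      + if i = j ∧ j = k then 1 / 4 * tan (-x i / 2) else 0 :=
  rfl

lemma kleinAngle_zero_add_kleinAngle_three (x : Fin 3 → ℝ) :
    kleinAngle 0 x + kleinAngle 3 x = π / 2 - x 2 / 2 := by
  simp only [kleinAngle, eps, Fin.isValue, Matrix.cons_val', Matrix.cons_val_fin_one,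
    Matrix.cons_val_zero, Matrix.cons_val_one, Matrix.cons_val, Fin.sum_univ_three, one_mul,
    neg_mul]
  ring

lemma kleinAngle_one_add_kleinAngle_two (x : Fin 3 → ℝ) :
    kleinAngle 1 x + kleinAngle 2 x = π / 2 - -(x 2 / 2) := by
  simp only [kleinAngle, eps, Fin.isValue, Matrix.cons_val', Matrix.cons_val_fin_one,
    Matrix.cons_val_zero, Matrix.cons_val_one, Matrix.cons_val, Fin.sum_univ_three, one_mul,
    neg_mul]
  ring

theorem klein_four_WDVV_second (x : Fin 3 → ℝ)
    (hcos : ∀ a : Fin 4, Real.cos (Real.pi / 4 - (∑ t : Fin 3, eps a t * x t) / 4) ≠ 0)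
    (hcos' : ∀ i : Fin 3, Real.cos (x i / 2) ≠ 0) :
    T 0 0 1 x * T 0 2 2 x + T 0 1 1 x * T 1 2 2 x + T 0 1 2 x * T 2 2 2 x
      = T 0 0 2 x * T 0 1 2 x + T 0 1 2 x * T 1 1 2 x + T 0 2 2 x * T 1 2 2 x := by
  replace hcos : ∀ a, cos (kleinAngle a x) ≠ 0 := hcos
  have h03 := tan_mul_add_tan_of_add_eq_pi_div_two_sub (hcos 0) (hcos 3) (hcos' 2)
    (kleinAngle_zero_add_kleinAngle_three x)
  have h12 := tan_mul_add_tan_of_add_eq_pi_div_two_sub (hcos 1) (hcos 2)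
    (by rw [cos_neg]; exact hcos' 2) (kleinAngle_one_add_kleinAngle_two x)
  rw [tan_neg] at h12
  simp only [T_eq_sum_tan_kleinAngle, Fin.sum_univ_four]
  simp only [eps, Fin.isValue, Matrix.cons_val', Matrix.cons_val_zero, Matrix.cons_val_fin_one,
    Matrix.cons_val_one, Matrix.cons_val, mul_one, one_div, one_mul, mul_neg, neg_neg, neg_mul,
    zero_ne_one, and_false, ↓reduceIte, add_zero, Fin.reduceEq, and_true, and_self, neg_div, tan_neg]
  linear_combination (-1 / 64 : ℝ) * h03 + (1 / 64 : ℝ) * h12
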